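/- Let M be an alternative O-bimodule with M = O·A(M) and Re as above. Then Re([p,q,x]) = 0 and Re([p,x]) = 0 for all p,q ∈ O and x ∈ M, and Re((pq)x) = Re((qx)p) = Re(x(pq)). -/

import Mathlib

noncomputable section

open scoped Quaternion

/-- The octonions, built from pairs of quaternions via the Cayley–Dickson construction. -/
def Octonion : Type := ℍ[ℝ] × ℍ[ℝ]

namespace Octonion

def mk' (a b : ℍ[ℝ]) : Octonion := Prod.mk a b
def q1 (x : Octonion) : ℍ[ℝ] := Prod.fst x
def q2 (x : Octonion) : ℍ[ℝ] := Prod.snd x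

instance : AddCommGroup Octonion := inferInstanceAs (AddCommGroup (ℍ[ℝ] × ℍ[ℝ]))
instance : Module ℝ Octonion := inferInstanceAs (Module ℝ (ℍ[ℝ] × ℍ[ℝ]))
instance : One Octonion := ⟨mk' 1 0⟩
instance : Mul Octonion :=
  ⟨fun x y => mk' (q1 x * q1 y - star (q2 y) * q2 x) (q2 y * q1 x + q2 x * star (q1 y))⟩

/-- Octonion conjugation. -/
def conj (x : Octonion) : Octonion := mk' (star (q1 x)) (-(q2 x))

/-- The real part of an octonion. -/
def re (x : Octonion) : ℝ := (q1 x).re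

/-- The standard basis `e 0 = 1, e 1, …, e 7` of the octonions. -/
def e : Fin 8 → Octonion :=
  ![mk' 1 0, mk' ⟨0,1,0,0⟩ 0, mk' ⟨0,0,1,0⟩ 0, mk' ⟨0,0,0,1⟩ 0,
    mk' 0 1, mk' 0 ⟨0,1,0,0⟩, mk' 0 ⟨0,0,1,0⟩, mk' 0 ⟨0,0,0,1⟩]

/-- The coordinates of an octonion with respect to the standard basis. -/
def coord (x : Octonion) : Fin 8 → ℝ :=
  ![(q1 x).re, (q1 x).imI, (q1 x).imJ, (q1 x).imK,
    (q2 x).re, (q2 x).imI, (q2 x).imJ, (q2 x).imK]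

end Octonion

/-!
For `m ∈ A(M)` the cyclic associator identities force `m p = p m` for every octonion `p`: the
difference `p ↦ p m - m p` vanishes at `1` and at every octonion associator `[c,p,q]`, and these
span `𝕆` since `2 e_i` is an associator for `i = 1, …, 7`. Hence `(a m) b = (ab) m` on
`𝕆·A(M)`, and `∑ e_i z e_i = 5 z - 12 re z` gives `Re(z m) = re z • m`. On these generators the
claims reduce to `re (xy) = re (yx)` and `re ((xy)z) = re (x(yz))`, and they extend to all of
`M = span (𝕆·A(M))` by linearity.
-/

namespace Octonion

@[ext] lemma ext {x y : Octonion} (h1 : q1 x = q1 y) (h2 : q2 x = q2 y) : x = y := Prod.ext h1 h2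

@[simp] lemma q1_mk' (a b : ℍ[ℝ]) : q1 (mk' a b) = a := rfl
@[simp] lemma q2_mk' (a b : ℍ[ℝ]) : q2 (mk' a b) = b := rfl
@[simp] lemma q1_mul (x y : Octonion) : q1 (x * y) = q1 x * q1 y - star (q2 y) * q2 x := rfl
@[simp] lemma q2_mul (x y : Octonion) : q2 (x * y) = q2 y * q1 x + q2 x * star (q1 y) := rfl
@[simp] lemma q1_one : q1 1 = 1 := rfl
@[simp] lemma q2_one : q2 1 = 0 := rfl
@[simp] lemma q1_add (x y : Octonion) : q1 (x + y) = q1 x + q1 y := rfl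
@[simp] lemma q2_add (x y : Octonion) : q2 (x + y) = q2 x + q2 y := rfl
@[simp] lemma q1_sub (x y : Octonion) : q1 (x - y) = q1 x - q1 y := rfl
@[simp] lemma q2_sub (x y : Octonion) : q2 (x - y) = q2 x - q2 y := rfl
@[simp] lemma q1_smul (r : ℝ) (x : Octonion) : q1 (r • x) = r • q1 x := rfl
@[simp] lemma q2_smul (r : ℝ) (x : Octonion) : q2 (r • x) = r • q2 x := rfl

@[simps] def qi : ℍ[ℝ] := ⟨0, 1, 0, 0⟩
@[simps] def qj : ℍ[ℝ] := ⟨0, 0, 1, 0⟩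
@[simps] def qk : ℍ[ℝ] := ⟨0, 0, 0, 1⟩

/-- The literals in `e` elaborate at type `ℍ[ℝ,-1,-1]`, which `simp` does not identify with `ℍ[ℝ]`;
restating `e` with named units lets `simp` compute with it. -/
lemma e_eq : e = ![mk' 1 0, mk' qi 0, mk' qj 0, mk' qk 0, mk' 0 1, mk' 0 qi, mk' 0 qj, mk' 0 qk] :=
  rfl

def assoc (a b c : Octonion) : Octonion := a * b * c - a * (b * c)

lemma re_mul_comm (x y : Octonion) : re (x * y) = re (y * x) := by
  simp only [re, q1_mul, Quaternion.re_sub, Quaternion.re_mul, Quaternion.re_star,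
    Quaternion.imI_star, Quaternion.imJ_star, Quaternion.imK_star]
  ring

lemma re_mul_assoc (x y z : Octonion) : re (x * y * z) = re (x * (y * z)) := by
  simp only [re, q1_mul, q2_mul, Quaternion.re_sub, Quaternion.re_mul, Quaternion.re_star,
    Quaternion.imI_star, Quaternion.imJ_star, Quaternion.imK_star, Quaternion.imI_sub,
    Quaternion.imI_mul, Quaternion.imJ_sub, Quaternion.imJ_mul, Quaternion.imK_sub,
    Quaternion.imK_mul, Quaternion.re_add, Quaternion.imI_add, Quaternion.imJ_add,
    Quaternion.imK_add, star_add, star_mul, star_star]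
  ring

lemma sum_e_mul_mul_e (z : Octonion) :
    ∑ i : Fin 7, e i.succ * z * e i.succ = (5 : ℝ) • z - (12 * re z) • 1 := by
  ext <;> simp [Fin.sum_univ_seven, e_eq, re] <;> ring

lemma exists_assoc_eq_two_smul_e (l : Fin 7) :
    ∃ a b c : Octonion, assoc a b c = (2 : ℝ) • e l.succ := by
  fin_cases l <;>
    [refine ⟨e 2, e 5, e 6, ?_⟩; refine ⟨e 1, e 4, e 7, ?_⟩; refine ⟨e 1, e 6, e 4, ?_⟩;
      refine ⟨e 1, e 3, e 6, ?_⟩; refine ⟨e 1, e 2, e 6, ?_⟩; refine ⟨e 1, e 4, e 3, ?_⟩;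
      refine ⟨e 1, e 2, e 4, ?_⟩] <;>
    ext <;> simp [assoc, e_eq] <;> norm_num

lemma span_range_e : Submodule.span ℝ (Set.range e) = ⊤ := by
  refine Submodule.eq_top_iff'.2 fun x => ?_
  have hx : x = ∑ j, coord x j • e j := by
    ext <;> simp [Fin.sum_univ_eight, e_eq, coord]
  rw [hx]
  exact Submodule.sum_mem _ fun j _ => Submodule.smul_mem _ _ (Submodule.subset_span ⟨j, rfl⟩)

section Bimodule

variable {M : Type*} [AddCommGroup M] [Module ℝ M] {L R : Octonion →ₗ[ℝ] M →ₗ[ℝ] M}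

/-- `[p,q,m] = [q,m,p] = [m,p,q]`, for the actions `L p m = p m` and `R p m = m p`. -/
structure CyclicAssociator (L R : Octonion →ₗ[ℝ] M →ₗ[ℝ] M) : Prop where
  left_eq_middle : ∀ (p q : Octonion) (m : M),
    L (p * q) m - L p (L q m) = R p (L q m) - L q (R p m)
  middle_eq_right : ∀ (p q : Octonion) (m : M),
    R p (L q m) - L q (R p m) = R q (R p m) - R (p * q) m

lemma CyclicAssociator.left_eq_right (h : CyclicAssociator L R) (p q : Octonion) (m : M) :
    L (p * q) m - L p (L q m) = R q (R p m) - R (p * q) m :=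
  (h.left_eq_middle p q m).trans (h.middle_eq_right p q m)

/-- `m ∈ A(M)`. -/
def IsAssocElem (L : Octonion →ₗ[ℝ] M →ₗ[ℝ] M) (m : M) : Prop :=
  ∀ a b : Octonion, L (a * b) m = L a (L b m)

def bimoduleRe (L R : Octonion →ₗ[ℝ] M →ₗ[ℝ] M) : M →ₗ[ℝ] M :=
  (5 / 12 : ℝ) • LinearMap.id - (1 / 12 : ℝ) • ∑ i : Fin 7, R (e i.succ) ∘ₗ L (e i.succ)

namespace IsAssocElem

variable {m : M}

lemma right_left_comm (h : CyclicAssociator L R) (hm : IsAssocElem L m) (p q : Octonion) :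
    R p (L q m) = L q (R p m) := by
  rw [← sub_eq_zero, ← h.left_eq_middle, hm, sub_self]

lemma right_right (h : CyclicAssociator L R) (hm : IsAssocElem L m) (p q : Octonion) :
    R q (R p m) = R (p * q) m := by
  rw [← sub_eq_zero, ← h.left_eq_right, hm, sub_self]

lemma left_mul_sub_left_left_left (hm : IsAssocElem L m) (p q a : Octonion) :
    L (p * q) (L a m) - L p (L q (L a m)) = L (assoc p q a) m := by
  rw [← hm, ← hm, ← hm, assoc, map_sub, LinearMap.sub_apply]

lemma right_assoc_eq_left_assoc (h : CyclicAssociator L R) (hm : IsAssocElem L m)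
    (c p q : Octonion) : R (assoc c p q) m = L (assoc c p q) m := by
  have hRL := hm.right_left_comm h
  have hRR := hm.right_right h
  -- `[m c, p, q]` is `m [c,p,q]`; cycling it and moving `c` past `q m` gives `[c, p, q m]`.
  calc R (assoc c p q) m = R q (R p (R c m)) - R (p * q) (R c m) := by
        rw [hRR, hRR, hRR, assoc, map_sub, LinearMap.sub_apply]
    _ = R p (L q (R c m)) - L q (R p (R c m)) := (h.middle_eq_right p q (R c m)).symm
    _ = R p (R c (L q m)) - R (c * p) (L q m) := by rw [hRL, hRR, hRL]
    _ = L (c * p) (L q m) - L c (L p (L q m)) := (h.left_eq_right c p _).symm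
    _ = L (assoc c p q) m := hm.left_mul_sub_left_left_left c p q

lemma right_eq_left (hL1 : ∀ m : M, L 1 m = m) (hR1 : ∀ m : M, R 1 m = m)
    (h : CyclicAssociator L R) (hm : IsAssocElem L m) (b : Octonion) : R b m = L b m := by
  suffices R.flip m = L.flip m from LinearMap.congr_fun this b
  refine LinearMap.ext_on_range span_range_e fun j => ?_
  cases j using Fin.cases with
  | zero => exact (hR1 m).trans (hL1 m).symm
  | succ l =>
    obtain ⟨c, p, q, hcpq⟩ := exists_assoc_eq_two_smul_e l
    have h2 := hm.right_assoc_eq_left_assoc h c p q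
    rw [hcpq, map_smul, map_smul, LinearMap.smul_apply, LinearMap.smul_apply] at h2
    exact smul_right_injective M two_ne_zero h2

lemma right_left (hL1 : ∀ m : M, L 1 m = m) (hR1 : ∀ m : M, R 1 m = m)
    (h : CyclicAssociator L R) (hm : IsAssocElem L m) (a b : Octonion) :
    R b (L a m) = L (a * b) m := by
  rw [hm.right_left_comm h, hm.right_eq_left hL1 hR1 h, hm]

lemma bimoduleRe_left (hL1 : ∀ m : M, L 1 m = m) (hR1 : ∀ m : M, R 1 m = m)
    (h : CyclicAssociator L R) (hm : IsAssocElem L m) (z : Octonion) :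
    bimoduleRe L R (L z m) = re z • m := by
  have hsum : (∑ i : Fin 7, R (e i.succ) ∘ₗ L (e i.succ)) (L z m)
      = L ((5 : ℝ) • z - (12 * re z) • 1) m := by
    rw [← sum_e_mul_mul_e, map_sum, LinearMap.sum_apply, LinearMap.sum_apply]
    refine Finset.sum_congr rfl fun i _ => ?_
    rw [LinearMap.comp_apply, ← hm, hm.right_left hL1 hR1 h]
  rw [bimoduleRe, LinearMap.sub_apply, LinearMap.smul_apply, LinearMap.smul_apply, hsum,
    LinearMap.id_apply, map_sub, map_smul, map_smul, LinearMap.sub_apply, LinearMap.smul_apply,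
    LinearMap.smul_apply, hL1]
  module

end IsAssocElem

lemma eq_of_isAssocElem {N : Type*} [AddCommGroup N] [Module ℝ N]
    (hspan : ∀ m : M,
      m ∈ Submodule.span ℝ {y : M | ∃ (p : Octonion) (x : M), IsAssocElem L x ∧ y = L p x})
    (f g : M →ₗ[ℝ] N) (h : ∀ c m, IsAssocElem L m → f (L c m) = g (L c m)) (x : M) :
    f x = g x := by
  refine LinearMap.congr_fun (LinearMap.ext_on (Submodule.eq_top_iff'.2 hspan) ?_) x
  rintro _ ⟨c, m, hm, rfl⟩
  exact h c m hm

end Bimodule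

end Octonion

open Octonion in
/-- In an alternative `𝕆`-bimodule `M` with `M = 𝕆·A(M)`:
`Re [p,q,x] = 0`, `Re [p,x] = 0`, and `Re((pq)x) = Re((qx)p) = Re(x(pq))`. -/
theorem octonion_bimodule_re_of_associator_commutator
    {M : Type*} [AddCommGroup M] [Module ℝ M]
    (L R : Octonion →ₗ[ℝ] M →ₗ[ℝ] M)
    (hL1 : ∀ m : M, L 1 m = m) (hR1 : ∀ m : M, R 1 m = m)
    -- `[p,q,m] = [q,m,p]`
    (hLM : ∀ (p q : Octonion) (m : M),
      L (p * q) m - L p (L q m) = R p (L q m) - L q (R p m))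
    -- `[q,m,p] = [m,p,q]`
    (hMR : ∀ (p q : Octonion) (m : M),
      R p (L q m) - L q (R p m) = R q (R p m) - R (p * q) m)
    -- `M = 𝕆 · A(M)`
    (hspan : ∀ m : M, m ∈ Submodule.span ℝ
      {y : M | ∃ (p : Octonion) (x : M),
        (∀ a b : Octonion, L (a * b) x = L a (L b x)) ∧ y = L p x})
    (ReM : M → M)
    (hRe : ∀ x : M, ReM x
      = (5 / 12 : ℝ) • x
        - (1 / 12 : ℝ) • ∑ i : Fin 7, R (e i.succ) (L (e i.succ) x)) :
    ∀ (p q : Octonion) (x : M),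
      ReM (L (p * q) x - L p (L q x)) = 0 ∧
      ReM (L p x - R p x) = 0 ∧
      ReM (L (p * q) x) = ReM (R p (L q x)) ∧
      ReM (R p (L q x)) = ReM (R (p * q) x) := by
  obtain rfl : ReM = bimoduleRe L R := funext fun x => by simp [hRe, bimoduleRe]
  have h : CyclicAssociator L R := ⟨hLM, hMR⟩
  have hre {m} (hm : IsAssocElem L m) := hm.bimoduleRe_left hL1 hR1 h
  have hRL {m} (hm : IsAssocElem L m) := hm.right_left hL1 hR1 h
  intro p q x
  refine ⟨eq_of_isAssocElem hspan (bimoduleRe L R ∘ₗ (L (p * q) - L p ∘ₗ L q)) 0 ?_ x,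
    eq_of_isAssocElem hspan (bimoduleRe L R ∘ₗ (L p - R p)) 0 ?_ x,
    eq_of_isAssocElem hspan (bimoduleRe L R ∘ₗ L (p * q)) (bimoduleRe L R ∘ₗ R p ∘ₗ L q) ?_ x,
    eq_of_isAssocElem hspan (bimoduleRe L R ∘ₗ R p ∘ₗ L q) (bimoduleRe L R ∘ₗ R (p * q)) ?_ x⟩ <;>
    intro c m hm <;>
    simp only [LinearMap.comp_apply, LinearMap.sub_apply, LinearMap.zero_apply]
  · rw [map_sub, ← hm, ← hm, ← hm, hre hm, hre hm, re_mul_assoc, sub_self]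
  · rw [map_sub, ← hm, hRL hm, hre hm, hre hm, re_mul_comm, sub_self]
  · rw [← hm, ← hm, hRL hm, hre hm, hre hm, re_mul_assoc, re_mul_comm]
  · rw [← hm, hRL hm, hRL hm, hre hm, hre hm, re_mul_comm, ← re_mul_assoc, re_mul_comm]
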